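/- arXiv:1903.05430 — 3 statements merged into one kernel-verified Lean document; each statement's English description precedes it below -/
import Mathlib

section
/- Let N ≥ 1 and let S ⊆ ℤ^N be a subset such that for infinitely many integers m ≥ 2, the reduction of S modulo m is all of (ℤ/mℤ)^N. If f ∈ ℂ[x₁,…,x_N] is a polynomial vanishing on every point of S, then f = 0. -/
/-!
If an integer polynomial `g` vanishes on `S`, then for any integer point `v` and any admissible
modulus `m` there is `s ∈ S` with `s ≡ v (mod m)`, so `m ∣ g(v) - g(s) = g(v)`; as `m` can be
taken arbitrarily large, `g(v) = 0`, and `g` vanishes on all of `ℤ^N`, hence `g = 0`. A rational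
polynomial is reduced to this case by clearing denominators. A complex polynomial is reduced to
the rational case by applying an arbitrary `ℚ`-linear functional `ℂ → ℚ` to its coefficients,
which commutes with evaluation at integer points.
-/

open MvPolynomial

def ReducesOntoModInfinitelyMany {σ : Type*} (S : Set (σ → ℤ)) : Prop :=
  {m : ℕ | ∀ v : σ → ZMod m, ∃ s ∈ S, ∀ i, (s i : ZMod m) = v i}.Infinite

namespace MvPolynomial

variable {σ : Type*}

theorem intCast_eval_congr {m : ℕ} (g : MvPolynomial σ ℤ) {x y : σ → ℤ}
    (h : ∀ i, (x i : ZMod m) = y i) : (eval x g : ZMod m) = eval y g := by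
  have hxy : Int.castRingHom (ZMod m) ∘ x = Int.castRingHom (ZMod m) ∘ y := _root_.funext h
  calc (eval x g : ZMod m) = eval (Int.castRingHom (ZMod m) ∘ x) (map (Int.castRingHom _) g) :=
        map_eval (Int.castRingHom (ZMod m)) x g
    _ = eval y g := by rw [hxy, ← map_eval]; rfl

theorem exists_map_intCast_eq_zsmul (p : MvPolynomial σ ℚ) :
    ∃ D : ℤ, D ≠ 0 ∧ ∃ g : MvPolynomial σ ℤ, map (Int.castRingHom ℚ) g = D • p := by
  obtain ⟨⟨D, hD⟩, hint⟩ :=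
    IsLocalization.exist_integer_multiples_of_finset (nonZeroDivisors ℤ) p.coeffs
  refine ⟨D, nonZeroDivisors.ne_zero hD, mem_range_map_iff_coeffs_subset.mpr ?_⟩
  intro c hc
  obtain ⟨d, hd, rfl⟩ := mem_coeffs_iff.mp hc
  have hpd : coeff d p ∈ p.coeffs :=
    mem_coeffs_iff.mpr ⟨d, mem_support_iff.mpr (right_ne_zero_of_smul (mem_support_iff.mp hd)), rfl⟩
  obtain ⟨r, hr⟩ := hint _ hpd
  exact ⟨r, by rw [coeff_smul, ← hr]; rfl⟩

theorem eval_intCast_addMonoidAlgebraMap {K L : Type*} [CommRing K] [CommRing L] (π : K →+ L)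
    (x : σ → ℤ) (f : MvPolynomial σ K) :
    eval (fun i => (x i : L)) (AddMonoidAlgebra.map π f) = π (eval (fun i => (x i : K)) f) := by
  induction f using induction_on' with
  | monomial u a =>
    rw [← single_eq_monomial, AddMonoidAlgebra.map_single, single_eq_monomial,
      single_eq_monomial, eval_monomial, eval_monomial]
    simp only [Finsupp.prod, ← Int.cast_pow, ← Int.cast_prod]
    rw [mul_comm a, ← zsmul_eq_mul, map_zsmul, zsmul_eq_mul, mul_comm]
  | add p q hp hq => rw [AddMonoidAlgebra.map_add, map_add, map_add, map_add, hp, hq]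

end MvPolynomial

namespace ReducesOntoModInfinitelyMany

variable {σ : Type*} {S : Set (σ → ℤ)}

theorem eq_zero_of_forall_eval_eq_zero (hS : ReducesOntoModInfinitelyMany S)
    {g : MvPolynomial σ ℤ} (hg : ∀ s ∈ S, eval s g = 0) : g = 0 := by
  refine MvPolynomial.funext fun v => ?_
  obtain ⟨m, hm, hlt⟩ := hS.exists_gt (eval v g).natAbs
  obtain ⟨s, hs, hsv⟩ := hm (fun i => v i)
  have hdvd : (m : ℤ) ∣ eval v g := by
    rw [← ZMod.intCast_zmod_eq_zero_iff_dvd, ← intCast_eval_congr g hsv, hg s hs, Int.cast_zero]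
  rw [map_zero]
  exact Int.eq_zero_of_dvd_of_natAbs_lt_natAbs hdvd (by simpa using hlt)

theorem eq_zero_of_forall_eval_ratCast_eq_zero (hS : ReducesOntoModInfinitelyMany S)
    {p : MvPolynomial σ ℚ} (hp : ∀ s ∈ S, eval (fun i => (s i : ℚ)) p = 0) : p = 0 := by
  obtain ⟨D, hD, g, hg⟩ := exists_map_intCast_eq_zsmul p
  have hg0 : g = 0 := hS.eq_zero_of_forall_eval_eq_zero fun s hs => by
    have h := map_eval (Int.castRingHom ℚ) s g
    rw [hg, map_zsmul] at h
    simpa [Function.comp_def, hp s hs] using h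
  rw [hg0, map_zero, eq_comm, smul_eq_zero] at hg
  exact hg.resolve_left hD

theorem eq_zero_of_forall_eval_intCast_eq_zero {K : Type*} [CommRing K] [Algebra ℚ K]
    (hS : ReducesOntoModInfinitelyMany S) {f : MvPolynomial σ K}
    (hf : ∀ s ∈ S, eval (fun i => (s i : K)) f = 0) : f = 0 := by
  ext d
  refine (Module.forall_dual_apply_eq_zero_iff ℚ _).mp fun π => ?_
  have h : AddMonoidAlgebra.map π.toAddMonoidHom f = 0 :=
    hS.eq_zero_of_forall_eval_ratCast_eq_zero fun s hs => by
      rw [eval_intCast_addMonoidAlgebraMap, hf s hs, map_zero]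
  simpa using congrArg (coeff d) h

end ReducesOntoModInfinitelyMany

theorem stmt_0_general (N : ℕ) (S : Set (Fin N → ℤ))
    (hS : {m : ℕ | 2 ≤ m ∧
      ∀ v : Fin N → ZMod m, ∃ s ∈ S, ∀ i, ((s i : ℤ) : ZMod m) = v i}.Infinite)
    (f : MvPolynomial (Fin N) ℂ)
    (hf : ∀ s ∈ S, MvPolynomial.eval (fun i => ((s i : ℤ) : ℂ)) f = 0) :
    f = 0 :=
  ReducesOntoModInfinitelyMany.eq_zero_of_forall_eval_intCast_eq_zero
    (hS.mono fun _ hm => hm.2) hf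

/-- A polynomial over ℂ vanishing on a set of integer points whose reduction
modulo `m` is all of `(ℤ/mℤ)^N` for infinitely many `m ≥ 2` must be zero. -/
theorem stmt_0 (N : ℕ) (hN : 1 ≤ N) (S : Set (Fin N → ℤ))
    (hS : {m : ℕ | 2 ≤ m ∧
      ∀ v : Fin N → ZMod m, ∃ s ∈ S, ∀ i, ((s i : ℤ) : ZMod m) = v i}.Infinite)
    (f : MvPolynomial (Fin N) ℂ)
    (hf : ∀ s ∈ S, MvPolynomial.eval (fun i => ((s i : ℤ) : ℂ)) f = 0) :
    f = 0 :=
  stmt_0_general N S hS f hf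
end

section
/- Let N ≥ 1 and let S ⊆ ℤ^N be a subset whose reduction modulo m is all of (ℤ/mℤ)^N for infinitely many integers m ≥ 2. If f ∈ ℤ[x₁,…,x_N] vanishes on S, then f = 0. -/
/-!
Reduction modulo `m` commutes with evaluation, so if every residue class of `(ℤ/mℤ)^N` meets `S`
then `m` divides every value of `f` on `ℤ^N`. A nonzero integer has only finitely many divisors,
so all values of `f` vanish, and a polynomial over the infinite domain `ℤ` vanishing everywhere
is zero.
-/

open MvPolynomial

theorem Int.eq_zero_of_setOf_natCast_dvd_infinite {n : ℤ} (h : {m : ℕ | (m : ℤ) ∣ n}.Infinite) :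
    n = 0 := by
  by_contra hn
  refine h ((Nat.divisors n.natAbs).finite_toSet.subset fun m hm => ?_)
  simpa [Nat.mem_divisors, hn] using Int.natCast_dvd.mp hm

theorem MvPolynomial.map_eval_eq_of_comp_eq {R S σ : Type*} [CommSemiring R] [CommSemiring S]
    {φ : R →+* S} {x y : σ → R} (h : φ ∘ x = φ ∘ y) (p : MvPolynomial σ R) :
    φ (eval x p) = φ (eval y p) := by
  rw [eval₂_comp, eval₂_comp, h]

theorem MvPolynomial.natCast_dvd_eval_of_vanishing_on_surjective_mod {σ : Type*}
    {S : Set (σ → ℤ)} {m : ℕ} (hm : ∀ v : σ → ZMod m, ∃ s ∈ S, ∀ i, ((s i : ℤ) : ZMod m) = v i)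
    {f : MvPolynomial σ ℤ} (hf : ∀ s ∈ S, eval s f = 0) (x : σ → ℤ) :
    (m : ℤ) ∣ eval x f := by
  obtain ⟨s, hsS, hsx⟩ := hm fun i => (x i : ZMod m)
  have hcomp : (Int.castRingHom (ZMod m)) ∘ x = (Int.castRingHom (ZMod m)) ∘ s :=
    _root_.funext fun i => (hsx i).symm
  rw [← ZMod.intCast_zmod_eq_zero_iff_dvd, ← eq_intCast (Int.castRingHom (ZMod m)),
    map_eval_eq_of_comp_eq hcomp, hf s hsS, map_zero]

theorem stmt_1_general (N : ℕ) (S : Set (Fin N → ℤ))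
    (hS : {m : ℕ | 2 ≤ m ∧
      ∀ v : Fin N → ZMod m, ∃ s ∈ S, ∀ i, ((s i : ℤ) : ZMod m) = v i}.Infinite)
    (f : MvPolynomial (Fin N) ℤ)
    (hf : ∀ s ∈ S, MvPolynomial.eval (fun i => s i) f = 0) :
    f = 0 := by
  refine MvPolynomial.funext fun x => ?_
  rw [map_zero]
  refine Int.eq_zero_of_setOf_natCast_dvd_infinite (hS.mono fun m hm => ?_)
  exact natCast_dvd_eval_of_vanishing_on_surjective_mod hm.2 hf x

/-- Integral-coefficient case: a polynomial over ℤ vanishing on a set of integer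
points whose reduction modulo `m` is all of `(ℤ/mℤ)^N` for infinitely many
`m ≥ 2` must be zero. -/
theorem stmt_1 (N : ℕ) (hN : 1 ≤ N) (S : Set (Fin N → ℤ))
    (hS : {m : ℕ | 2 ≤ m ∧
      ∀ v : Fin N → ZMod m, ∃ s ∈ S, ∀ i, ((s i : ℤ) : ZMod m) = v i}.Infinite)
    (f : MvPolynomial (Fin N) ℤ)
    (hf : ∀ s ∈ S, MvPolynomial.eval (fun i => s i) f = 0) :
    f = 0 :=
  stmt_1_general N S hS f hf
end

section
/- Suppose that for every m ≥ 2 and every tuple (h^{p,q}) ∈ (ℤ/mℤ)^{N} indexed by a fundamental domain of the Hodge symmetries with h^{0,0} = 1, there exists an integer point in S ⊆ ℤ^N reducing to it modulo m, where S is a fixed set of integer tuples (the realizable Hodge diamonds). Then any polynomial f ∈ ℂ[x₁,…,x_N] vanishing on S is identically zero after restricting to the affine hyperplane {x₀ = 1} corresponding to h^{0,0} = 1; equivalently, there are no nonzero polynomial relations among the remaining N-1 coordinates of points of S. -/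
/-!
A polynomial over `ℤ` vanishing on a set `T ⊆ ℤ^σ` that is surjective modulo every `m ≥ 2` takes,
at any integer point `a`, a value divisible by every `m`: pick `t ∈ T` congruent to `a` mod `m`.
So it vanishes on all of `ℤ^σ` and is zero. Clearing denominators carries this over to `ℚ`, and
applying `ℚ`-linear functionals to the coefficients carries it over to `ℂ`. Finally, substituting
`x₀ = 1` into `f` gives a polynomial in the remaining variables which still vanishes on `S`,
because every point of `S` has `x₀ = 1`.
-/

open MvPolynomial

section

variable {σ : Type*}

def IsZariskiDense {R : Type*} [CommSemiring R] (T : Set (σ → R)) : Prop :=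
  ∀ p : MvPolynomial σ R, (∀ t ∈ T, eval t p = 0) → p = 0

def SurjectiveModEvery (T : Set (σ → ℤ)) : Prop :=
  ∀ m : ℕ, 2 ≤ m → ∀ v : σ → ZMod m, ∃ t ∈ T, ∀ i, ((t i : ℤ) : ZMod m) = v i

theorem MvPolynomial.linearMap_eval_algebraMap {K L : Type*} [CommSemiring K] [CommSemiring L]
    [Algebra K L] (φ : L →ₗ[K] K) (t : σ → K) (f : MvPolynomial σ L) :
    φ (eval (algebraMap K L ∘ t) f) = eval t (AddMonoidAlgebra.map φ.toAddMonoidHom f) := by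
  induction f using MvPolynomial.induction_on' with
  | monomial s c =>
    rw [eval_monomial, ← single_eq_monomial, AddMonoidAlgebra.map_single, single_eq_monomial,
      eval_monomial]
    simp_rw [Function.comp_apply, ← map_pow]
    rw [← map_finsuppProd, mul_comm, ← Algebra.smul_def, map_smul, smul_eq_mul, mul_comm]
    rfl
  | add p q hp hq => simp [AddMonoidAlgebra.map_add, hp, hq]

theorem SurjectiveModEvery.isZariskiDense {T : Set (σ → ℤ)} (hT : SurjectiveModEvery T) :
    IsZariskiDense T := by
  intro p hp
  refine MvPolynomial.funext fun a => ?_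
  rw [map_zero]
  set m := (eval a p).natAbs + 2
  obtain ⟨t, ht, hta⟩ := hT m (by omega) fun i => (a i : ZMod m)
  have hmod : Int.castRingHom (ZMod m) (eval a p) = 0 := by
    rw [eval₂_comp, ← map_zero (Int.castRingHom (ZMod m)), ← hp t ht, eval₂_comp]
    congr 1
    exact _root_.funext fun i => (hta i).symm
  exact Int.eq_zero_of_dvd_of_natAbs_lt_natAbs (d := m)
    ((ZMod.intCast_zmod_eq_zero_iff_dvd _ _).1 hmod) (by omega)

theorem IsZariskiDense.image_algebraMap_of_isFractionRing {R K : Type*} [CommRing R] [CommRing K]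
    [Algebra R K] [IsFractionRing R K] {T : Set (σ → R)} (hT : IsZariskiDense T) :
    IsZariskiDense ((algebraMap R K ∘ ·) '' T) := by
  intro f hf
  rw [Set.forall_mem_image] at hf
  obtain ⟨b, hb⟩ := IsLocalization.exist_integer_multiples (nonZeroDivisors R) f.support (coeff · f)
  obtain ⟨p, hp⟩ : (b : R) • f ∈ Set.range (map (algebraMap R K)) := by
    rw [mem_range_map_iff_coeffs_subset]
    intro c hc
    obtain ⟨n, hn, rfl⟩ := mem_coeffs_iff.1 hc
    rw [coeff_smul]
    exact hb n (support_smul hn)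
  have hp0 : p = 0 := hT p fun t ht => IsFractionRing.injective R K <| by
    rw [map_zero, eval₂_comp, ← eval_map, hp, ← algebraMap_smul K, smul_eval, hf ht, mul_zero]
  rw [hp0, map_zero, ← algebraMap_smul K] at hp
  exact (IsLocalization.map_units K b).smul_eq_zero.1 hp.symm

theorem IsZariskiDense.image_algebraMap {K L : Type*} [Field K] [CommRing L] [Algebra K L]
    {T : Set (σ → K)} (hT : IsZariskiDense T) : IsZariskiDense ((algebraMap K L ∘ ·) '' T) := by
  intro f hf
  rw [Set.forall_mem_image] at hf
  ext n
  rw [coeff_zero, ← Module.forall_dual_apply_eq_zero_iff K]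
  intro φ
  have hφf : AddMonoidAlgebra.map φ.toAddMonoidHom f = 0 :=
    hT _ fun t ht => by rw [← linearMap_eval_algebraMap, hf ht, map_zero]
  exact congr_arg (coeff n) hφf

theorem SurjectiveModEvery.isZariskiDense_intCast {K : Type*} [CommRing K] [Algebra ℚ K]
    {T : Set (σ → ℤ)} (hT : SurjectiveModEvery T) :
    IsZariskiDense ((fun t i => (t i : K)) '' T) := by
  have h := (hT.isZariskiDense.image_algebraMap_of_isFractionRing (K := ℚ)).image_algebraMap
    (L := K)
  simpa [Set.image_image, Function.comp_def] using h

theorem surjectiveModEvery_image_comp_val {S : Set (σ → ℤ)} (i₀ : σ)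
    (hS : ∀ m : ℕ, 2 ≤ m → ∀ v : σ → ZMod m, v i₀ = 1 →
      ∃ s ∈ S, ∀ i, ((s i : ℤ) : ZMod m) = v i) :
    SurjectiveModEvery ((· ∘ Subtype.val) '' S : Set ({i // i ≠ i₀} → ℤ)) := by
  classical
  intro m hm v
  obtain ⟨s, hs, hsv⟩ := hS m hm (fun i => if h : i = i₀ then 1 else v ⟨i, h⟩) (by simp)
  exact ⟨s ∘ Subtype.val, ⟨s, hs, rfl⟩, fun i => by simpa [i.2] using hsv i⟩

section SubstituteOne

variable {R : Type*} [CommSemiring R] [DecidableEq σ] (i₀ : σ)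

theorem MvPolynomial.eval_aeval_ite_one {x : σ → R} (hx : x i₀ = 1) (f : MvPolynomial σ R) :
    eval x (aeval (fun i => if i = i₀ then 1 else X i) f) = eval x f := by
  change aeval x (aeval _ f) = aeval x f
  rw [aeval_eq_bind₁, aeval_bind₁]
  congr 2 with i
  split_ifs with h <;> simp [h, hx]

theorem MvPolynomial.exists_rename_eq_aeval_ite_one (f : MvPolynomial σ R) :
    ∃ g : MvPolynomial {i // i ≠ i₀} R,
      rename Subtype.val g = aeval (fun i => if i = i₀ then 1 else X i) f := by
  nontriviality R
  refine exists_rename_eq_of_vars_subset_range _ _ Subtype.val_injective fun i hi => ⟨⟨i, ?_⟩, rfl⟩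
  rintro rfl
  rw [aeval_eq_bind₁] at hi
  obtain ⟨j, -, hj⟩ := Finset.mem_biUnion.1 (vars_bind₁ _ _ hi)
  split_ifs at hj with h
  · simp at hj
  · exact h (by simpa [vars_X, eq_comm] using hj)

end SubstituteOne

end

/-- If `S ⊆ ℤ^N` has first coordinate (the value `h^{0,0}`) always `1` and is
surjective modulo every `m ≥ 2` onto tuples with first coordinate `1`, then any
complex polynomial vanishing on `S` becomes zero after substituting `x₀ = 1`;
equivalently, there are no nonzero polynomial relations among the remaining
`N-1` coordinates of points of `S`. -/
theorem stmt_19 (N : ℕ) (hN : 0 < N) (S : Set (Fin N → ℤ))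
    (h00 : ∀ s ∈ S, s ⟨0, hN⟩ = 1)
    (hsurj : ∀ m : ℕ, 2 ≤ m → ∀ v : Fin N → ZMod m, v ⟨0, hN⟩ = 1 →
      ∃ s ∈ S, ∀ i, ((s i : ℤ) : ZMod m) = v i) :
    (∀ f : MvPolynomial (Fin N) ℂ,
      (∀ s ∈ S, MvPolynomial.eval (fun i => ((s i : ℤ) : ℂ)) f = 0) →
      MvPolynomial.aeval
        (fun i : Fin N => if i = ⟨0, hN⟩ then (1 : MvPolynomial (Fin N) ℂ)
          else MvPolynomial.X i) f = 0) ∧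
    (∀ g : MvPolynomial {i : Fin N // i ≠ ⟨0, hN⟩} ℂ,
      (∀ s ∈ S, MvPolynomial.eval (fun i => ((s i.1 : ℤ) : ℂ)) g = 0) →
      g = 0) := by
  have hdense := (surjectiveModEvery_image_comp_val _ hsurj).isZariskiDense_intCast (K := ℂ)
  have hrel : ∀ g : MvPolynomial {i : Fin N // i ≠ ⟨0, hN⟩} ℂ,
      (∀ s ∈ S, eval (fun i => ((s i.1 : ℤ) : ℂ)) g = 0) → g = 0 := fun g hg =>
    hdense g (by simpa [Set.forall_mem_image] using hg)
  refine ⟨fun f hf => ?_, hrel⟩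
  obtain ⟨g, hg⟩ := exists_rename_eq_aeval_ite_one ⟨0, hN⟩ f
  rw [← hg, hrel g fun s hs => ?_, map_zero]
  rw [← hf s hs, ← eval_aeval_ite_one ⟨0, hN⟩ (by simp [h00 s hs]) f, ← hg, eval_rename]
  rfl
end
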